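/- arXiv:1507.02648 — 4 statements merged into one kernel-verified Lean document; each statement's English description precedes it below -/
import Mathlib

section
/- Let C be a fibration category and f : A → B an acyclic fibration. Then the unit and counit of the adjunction f_! ⊣ f* between C↠A and C↠B are componentwise weak equivalences; consequently f* : C↠B → C↠A is a homotopy equivalence of fibration categories and hence a weak equivalence of fibration categories (it induces an equivalence of homotopy categories). -/
open CategoryTheory CategoryTheory.Limits

open CategoryTheory CategoryTheory.Limits

universe v u

/-- A fibration category in the sense of Brown (as in Kapulkin's paper):
wide subcategories of fibrations and weak equivalences, 2-out-of-6,
isomorphisms are acyclic fibrations, pullbacks along fibrations exist and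
(acyclic) fibrations are stable under pullback, all objects are fibrant,
and every map factors as a weak equivalence followed by a fibration. -/
structure FibrationCategory (C : Type u) [Category.{v} C] where
  Fib : MorphismProperty C
  Weq : MorphismProperty C
  fib_id : ∀ X : C, Fib (𝟙 X)
  fib_comp : ∀ {X Y Z : C} (f : X ⟶ Y) (g : Y ⟶ Z), Fib f → Fib g → Fib (f ≫ g)
  weq_id : ∀ X : C, Weq (𝟙 X)
  weq_comp : ∀ {X Y Z : C} (f : X ⟶ Y) (g : Y ⟶ Z), Weq f → Weq g → Weq (f ≫ g)
  two_of_six : ∀ {X Y Z W : C} (f : X ⟶ Y) (g : Y ⟶ Z) (h : Z ⟶ W),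
      Weq (f ≫ g) → Weq (g ≫ h) → Weq f ∧ Weq g ∧ Weq h ∧ Weq (f ≫ g ≫ h)
  iso_acyclic : ∀ {X Y : C} (f : X ⟶ Y), IsIso f → Fib f ∧ Weq f
  pullback_exists : ∀ {X Y Z : C} (f : X ⟶ Z) (g : Y ⟶ Z), Fib g → HasPullback f g
  fib_stable : ∀ {P X Y Z : C} (fst : P ⟶ X) (snd : P ⟶ Y) (f : X ⟶ Z) (g : Y ⟶ Z),
      IsPullback fst snd f g → Fib g → Fib fst
  acyclic_fib_stable : ∀ {P X Y Z : C} (fst : P ⟶ X) (snd : P ⟶ Y) (f : X ⟶ Z) (g : Y ⟶ Z),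
      IsPullback fst snd f g → Fib g → Weq g → Weq fst
  term : C
  isTerminal : IsTerminal term
  all_fibrant : ∀ X : C, Fib (isTerminal.from X)
  factor : ∀ {X Y : C} (f : X ⟶ Y), ∃ (Z : C) (w : X ⟶ Z) (p : Z ⟶ Y),
      Weq w ∧ Fib p ∧ w ≫ p = f

variable {C : Type u} [Category.{v} C]

/-- The category `C ↠ A` of fibrations over `A`: the full subcategory of the
slice `C/A` on the objects whose structure map is a fibration. -/
abbrev FibOver (F : FibrationCategory C) (A : C) : Type _ :=
  ObjectProperty.FullSubcategory (fun X : Over A => F.Fib X.hom)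

/-- Fibrations in `C ↠ A` are created by the forgetful functor to `C`. -/
def sFib (F : FibrationCategory C) (A : C) : MorphismProperty (FibOver F A) :=
  fun _ _ f => F.Fib f.hom.left

/-- Weak equivalences in `C ↠ A` are created by the forgetful functor to `C`. -/
def sWeq (F : FibrationCategory C) (A : C) : MorphismProperty (FibOver F A) :=
  fun _ _ f => F.Weq f.hom.left

/-- For a fibration `f : A ⟶ B`, the postcomposition functor
`f_! : C↠A ⥤ C↠B`, sending `p : X ↠ A` to `f ∘ p : X ↠ B`. -/
def shriek (F : FibrationCategory C) {A B : C} (f : A ⟶ B) (hf : F.Fib f) :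
    FibOver F A ⥤ FibOver F B where
  obj X := ⟨Over.mk (X.obj.hom ≫ f), F.fib_comp _ _ X.property hf⟩
  map {X Y} g := ⟨Over.homMk g.hom.left (by simp [← Category.assoc, Over.w g.hom])⟩

/-!
Let `f : A ⟶ B` be an acyclic fibration. The counit of `f_! ⊣ f*` at `Y` is the projection
`f*Y ⟶ Y`, a pullback of `f` and hence a weak equivalence, and the unit followed by this
projection is the identity, so the unit is a weak equivalence by 2-out-of-3. Naturality of the
counit and 2-out-of-3 again show that `f*` preserves weak equivalences, and a pair of
weak-equivalence-preserving functors related by natural weak equivalences in both directions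
induces mutually inverse equivalences of the localizations.
-/

namespace CategoryTheory.LocalizerMorphism

variable {C₁ C₂ : Type*} [Category* C₁] [Category* C₂]
  {W₁ : MorphismProperty C₁} {W₂ : MorphismProperty C₂}

/-- Unlike in `isLocalizedEquivalence_of_unit_of_unit`, the two transformations point in
opposite directions, as the unit and counit of an adjunction do. -/
lemma isLocalizedEquivalence_of_unit_of_counit (Φ : LocalizerMorphism W₁ W₂)
    (Ψ : LocalizerMorphism W₂ W₁) (η : 𝟭 C₂ ⟶ Ψ.functor ⋙ Φ.functor)
    (ε : Φ.functor ⋙ Ψ.functor ⟶ 𝟭 C₁) (hη : ∀ X₂, W₂ (η.app X₂))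
    (hε : ∀ X₁, W₁ (ε.app X₁)) :
    Φ.IsLocalizedEquivalence where
  isEquivalence := by
    have : IsIso (Functor.whiskerRight η W₂.Q) := by
      rw [NatTrans.isIso_iff_isIso_app]
      exact fun _ ↦ Localization.inverts W₂.Q W₂ _ (hη _)
    have : IsIso (Functor.whiskerRight ε W₁.Q) := by
      rw [NatTrans.isIso_iff_isIso_app]
      exact fun _ ↦ Localization.inverts W₁.Q W₁ _ (hε _)
    refine (Localization.equivalence W₁.Q W₁ W₂.Q W₂ (Φ.functor ⋙ W₂.Q)
      (Φ.localizedFunctor W₁.Q W₂.Q)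
      (Ψ.functor ⋙ W₁.Q) (Ψ.localizedFunctor W₂.Q W₁.Q) ?_ ?_).isEquivalence_functor
    · exact Functor.associator _ _ _ ≪≫
        Functor.isoWhiskerLeft _ (CatCommSq.iso Ψ.functor W₂.Q W₁.Q _).symm ≪≫
        (Functor.associator _ _ _).symm ≪≫
        asIso (Functor.whiskerRight ε W₁.Q) ≪≫ Functor.leftUnitor _
    · exact Functor.associator _ _ _ ≪≫
        Functor.isoWhiskerLeft _ (CatCommSq.iso Φ.functor W₁.Q W₂.Q _).symm ≪≫
        (Functor.associator _ _ _).symm ≪≫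
        (asIso (Functor.whiskerRight η W₂.Q)).symm ≪≫ Functor.leftUnitor _

end CategoryTheory.LocalizerMorphism

namespace FibrationCategory

variable (F : FibrationCategory C)

lemma weq_of_postcomp {X Y Z : C} {g : X ⟶ Y} {h : Y ⟶ Z}
    (hgh : F.Weq (g ≫ h)) (hh : F.Weq h) : F.Weq g :=
  (F.two_of_six g h (𝟙 Z) hgh (by simpa using hh)).1

variable {A B : C} (f : A ⟶ B)

noncomputable def pullbackObj (X : FibOver F B) : FibOver F A :=
  haveI := F.pullback_exists f X.obj.hom X.property
  ⟨Over.mk (pullback.fst f X.obj.hom),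
    F.fib_stable _ _ _ _ (IsPullback.of_hasPullback f X.obj.hom) X.property⟩

noncomputable def pullbackSnd (X : FibOver F B) : (F.pullbackObj f X).obj.left ⟶ X.obj.left :=
  haveI := F.pullback_exists f X.obj.hom X.property
  pullback.snd f X.obj.hom

lemma isPullback_pullbackObj (X : FibOver F B) :
    IsPullback (F.pullbackObj f X).obj.hom (F.pullbackSnd f X) f X.obj.hom :=
  haveI := F.pullback_exists f X.obj.hom X.property
  IsPullback.of_hasPullback f X.obj.hom

lemma weq_pullbackSnd (hf : F.Fib f) (hw : F.Weq f) (X : FibOver F B) :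
    F.Weq (F.pullbackSnd f X) :=
  F.acyclic_fib_stable _ _ _ _ (F.isPullback_pullbackObj f X).flip hf hw

variable {f} (hf : F.Fib f)

noncomputable def shriekHomEquiv (X : FibOver F A) (Y : FibOver F B) :
    ((shriek F f hf).obj X ⟶ Y) ≃ (X ⟶ F.pullbackObj f Y) where
  toFun g := ⟨Over.homMk ((F.isPullback_pullbackObj f Y).lift X.obj.hom g.hom.left
    (Over.w g.hom).symm) ((F.isPullback_pullbackObj f Y).lift_fst _ _ _)⟩
  invFun h := ⟨Over.homMk (h.hom.left ≫ F.pullbackSnd f Y) (by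
    change (h.hom.left ≫ F.pullbackSnd f Y) ≫ Y.obj.hom = X.obj.hom ≫ f
    rw [Category.assoc, ← (F.isPullback_pullbackObj f Y).w, ← Category.assoc, Over.w h.hom])⟩
  left_inv g := by
    ext
    exact (F.isPullback_pullbackObj f Y).lift_snd _ _ _
  right_inv h := by
    ext
    apply (F.isPullback_pullbackObj f Y).hom_ext
    · exact ((F.isPullback_pullbackObj f Y).lift_fst _ _ _).trans (Over.w h.hom).symm
    · exact IsPullback.lift_snd _ _ _ _

@[simp]
lemma shriek_map_hom_left {X X' : FibOver F A} (g : X ⟶ X') :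
    ((shriek F f hf).map g).hom.left = g.hom.left :=
  rfl

@[simp]
lemma shriekHomEquiv_apply_left_fst {X : FibOver F A} {Y : FibOver F B}
    (k : (shriek F f hf).obj X ⟶ Y) :
    (F.shriekHomEquiv hf X Y k).hom.left ≫ (F.pullbackObj f Y).obj.hom = X.obj.hom :=
  (F.isPullback_pullbackObj f Y).lift_fst _ _ _

@[simp]
lemma shriekHomEquiv_apply_left_snd {X : FibOver F A} {Y : FibOver F B}
    (k : (shriek F f hf).obj X ⟶ Y) :
    (F.shriekHomEquiv hf X Y k).hom.left ≫ F.pullbackSnd f Y = k.hom.left :=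
  (F.isPullback_pullbackObj f Y).lift_snd _ _ _

lemma shriekHomEquiv_naturality_left {X' X : FibOver F A} {Y : FibOver F B} (g : X' ⟶ X)
    (k : (shriek F f hf).obj X ⟶ Y) :
    F.shriekHomEquiv hf X' Y ((shriek F f hf).map g ≫ k) = g ≫ F.shriekHomEquiv hf X Y k := by
  ext
  apply (F.isPullback_pullbackObj f Y).hom_ext
  · simp
  · simp only [ObjectProperty.FullSubcategory.comp_hom, Over.comp_left, Category.assoc,
      shriekHomEquiv_apply_left_snd]
    rfl

noncomputable def pullbackFunctor : FibOver F B ⥤ FibOver F A :=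
  Adjunction.rightAdjointOfEquiv (F.shriekHomEquiv hf)
    fun _ _ _ ↦ F.shriekHomEquiv_naturality_left hf

noncomputable def shriekPullbackAdj : shriek F f hf ⊣ F.pullbackFunctor hf :=
  Adjunction.adjunctionOfEquivRight _ _

lemma shriekPullbackAdj_unit_left_comp_pullbackSnd (X : FibOver F A) :
    ((F.shriekPullbackAdj hf).unit.app X).hom.left ≫ F.pullbackSnd f _ = 𝟙 X.obj.left :=
  (F.isPullback_pullbackObj f _).lift_snd _ _ _

lemma shriekPullbackAdj_counit_left (Y : FibOver F B) :
    ((F.shriekPullbackAdj hf).counit.app Y).hom.left = F.pullbackSnd f Y :=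
  Category.id_comp _

variable (hw : F.Weq f)
include hw

lemma weq_shriekPullbackAdj_unit (X : FibOver F A) :
    F.Weq ((F.shriekPullbackAdj hf).unit.app X).hom.left :=
  F.weq_of_postcomp
    ((F.shriekPullbackAdj_unit_left_comp_pullbackSnd hf X).symm ▸ F.weq_id _)
    (F.weq_pullbackSnd f hf hw _)

lemma weq_shriekPullbackAdj_counit (Y : FibOver F B) :
    F.Weq ((F.shriekPullbackAdj hf).counit.app Y).hom.left :=
  F.shriekPullbackAdj_counit_left hf Y ▸ F.weq_pullbackSnd f hf hw Y

lemma weq_pullbackFunctor_map {Y Y' : FibOver F B} (g : Y ⟶ Y') (hg : F.Weq g.hom.left) :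
    F.Weq ((F.pullbackFunctor hf).map g).hom.left := by
  have hsq : ((F.pullbackFunctor hf).map g).hom.left ≫ F.pullbackSnd f Y' =
      F.pullbackSnd f Y ≫ g.hom.left := by
    have := congr_arg (fun k ↦ k.hom.left) ((F.shriekPullbackAdj hf).counit.naturality g)
    simp only [Functor.comp_map, Functor.id_map, ObjectProperty.FullSubcategory.comp_hom,
      Over.comp_left, shriek_map_hom_left, shriekPullbackAdj_counit_left] at this
    exact this
  exact F.weq_of_postcomp (hsq ▸ F.weq_comp _ _ (F.weq_pullbackSnd f hf hw Y) hg)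
    (F.weq_pullbackSnd f hf hw Y')

noncomputable def pullbackLocalizerMorphism : LocalizerMorphism (sWeq F B) (sWeq F A) where
  functor := F.pullbackFunctor hf
  map _ _ g hg := F.weq_pullbackFunctor_map hf hw g hg

omit hw in
def shriekLocalizerMorphism : LocalizerMorphism (sWeq F A) (sWeq F B) where
  functor := shriek F f hf
  map _ _ _ hg := hg

instance isLocalizedEquivalence_pullbackLocalizerMorphism :
    (F.pullbackLocalizerMorphism hf hw).IsLocalizedEquivalence :=
  LocalizerMorphism.isLocalizedEquivalence_of_unit_of_counit _ (F.shriekLocalizerMorphism hf)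
    (F.shriekPullbackAdj hf).unit (F.shriekPullbackAdj hf).counit
    (F.weq_shriekPullbackAdj_unit hf hw) (F.weq_shriekPullbackAdj_counit hf hw)

end FibrationCategory

/-- If `f : A ⟶ B` is an acyclic fibration, then the unit and counit of the
adjunction `f_! ⊣ f*` are componentwise weak equivalences, and consequently the
pullback functor `f* : C↠B ⥤ C↠A` induces an equivalence of homotopy categories
(the localizations at the weak equivalences), i.e. it is a weak equivalence of
fibration categories. -/
theorem stmt7 (F : FibrationCategory C) {A B : C} (f : A ⟶ B)
    (hf : F.Fib f) (hw : F.Weq f) :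
    ∃ (P : FibOver F B ⥤ FibOver F A) (adj : shriek F f hf ⊣ P),
      -- `P` is given on objects by pullback along `f`
      (∀ X : FibOver F B, ∃ q : (P.obj X).obj.left ⟶ X.obj.left,
        IsPullback (P.obj X).obj.hom q f X.obj.hom) ∧
      -- the unit is a componentwise weak equivalence
      (∀ X : FibOver F A, F.Weq (adj.unit.app X).hom.left) ∧
      -- the counit is a componentwise weak equivalence
      (∀ Y : FibOver F B, F.Weq (adj.counit.app Y).hom.left) ∧
      -- `f*` induces an equivalence of homotopy categories
      ∃ L : (sWeq F B).Localization ⥤ (sWeq F A).Localization,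
        Nonempty ((sWeq F B).Q ⋙ L ≅ P ⋙ (sWeq F A).Q) ∧ L.IsEquivalence :=
  ⟨F.pullbackFunctor hf, F.shriekPullbackAdj hf,
    fun X ↦ ⟨F.pullbackSnd f X, F.isPullback_pullbackObj f X⟩,
    F.weq_shriekPullbackAdj_unit hf hw, F.weq_shriekPullbackAdj_counit hf hw,
    (F.pullbackLocalizerMorphism hf hw).localizedFunctor (sWeq F B).Q (sWeq F A).Q,
    ⟨(CatCommSq.iso (F.pullbackLocalizerMorphism hf hw).functor _ _ _).symm⟩, inferInstance⟩
end

section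
/- Let F : C ⇄ D : G be an adjoint pair of exact functors between fibration categories. If two morphisms f, g : A → GB in C are right-homotopic, then their adjoint transposes f̄, ḡ : FA → B are right-homotopic in D. -/
open CategoryTheory CategoryTheory.Limits

universe v u

universe v₂ u₂

variable {C : Type u} [Category.{v} C]

/-- `f` and `g` are right-homotopic: there is a product `B × B` (a pullback of
`B → 1 ← B`), a path object `B ≅> PB ↠ B × B` factoring the diagonal, an acyclic
fibration `A' ↠ A` and a right homotopy `H : A' ⟶ PB` whose two components are
`f` and `g` (precomposed with `A' ↠ A`). -/
def RightHomotopic (F : FibrationCategory C) {A B : C} (f g : A ⟶ B) : Prop :=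
  ∃ (BB : C) (pr₁ pr₂ : BB ⟶ B),
    IsPullback pr₁ pr₂ (F.isTerminal.from B) (F.isTerminal.from B) ∧
    ∃ (PB : C) (w : B ⟶ PB) (q : PB ⟶ BB),
      F.Weq w ∧ F.Fib q ∧ w ≫ q ≫ pr₁ = 𝟙 B ∧ w ≫ q ≫ pr₂ = 𝟙 B ∧
      ∃ (A' : C) (s : A' ⟶ A) (H : A' ⟶ PB),
        F.Fib s ∧ F.Weq s ∧ H ≫ q ≫ pr₁ = s ≫ f ∧ H ≫ q ≫ pr₂ = s ≫ g

/-- A functor between fibration categories is exact if it preserves fibrations,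
acyclic fibrations, pullbacks along fibrations, and the terminal object. -/
def IsExact {C : Type u} [Category.{v} C] {D : Type u₂} [Category.{v₂} D]
    (FC : FibrationCategory C) (FD : FibrationCategory D) (T : C ⥤ D) : Prop :=
  (∀ {X Y : C} (f : X ⟶ Y), FC.Fib f → FD.Fib (T.map f)) ∧
  (∀ {X Y : C} (f : X ⟶ Y), FC.Fib f → FC.Weq f → FD.Fib (T.map f) ∧ FD.Weq (T.map f)) ∧
  (∀ {P X Y Z : C} (fst : P ⟶ X) (snd : P ⟶ Y) (f : X ⟶ Z) (g : Y ⟶ Z),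
    IsPullback fst snd f g → FC.Fib g →
    IsPullback (T.map fst) (T.map snd) (T.map f) (T.map g)) ∧
  Nonempty (IsTerminal (T.obj FC.term))

section Aux

variable {C' : Type*} [Category C']

/-- 2-out-of-3, left cancellation, derived from 2-out-of-6. -/
lemma FibrationCategory.weq_cancel_left (F : FibrationCategory C')
    {X Y Z : C'} (a : X ⟶ Y) (b : Y ⟶ Z) (hab : F.Weq (a ≫ b)) (hb : F.Weq b) :
    F.Weq a :=
  (F.two_of_six a b (𝟙 Z) hab (by simpa using hb)).1

/-- 2-out-of-3, right cancellation, derived from 2-out-of-6. -/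
lemma FibrationCategory.weq_cancel_right (F : FibrationCategory C')
    {X Y Z : C'} (a : X ⟶ Y) (b : Y ⟶ Z) (ha : F.Weq a) (hab : F.Weq (a ≫ b)) :
    F.Weq b :=
  (F.two_of_six (𝟙 X) a b (by simpa using ha) hab).2.2.1

end Aux

/-- Let `L ⊣ R` be an adjoint pair of exact functors between fibration
categories. If `f, g : A ⟶ R.obj B` are right-homotopic in `C`, then their
adjoint transposes `L.obj A ⟶ B` are right-homotopic in `D`. -/
theorem stmt9 {D : Type u₂} [Category.{v₂} D]
    (FC : FibrationCategory C) (FD : FibrationCategory D)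
    (L : C ⥤ D) (R : D ⥤ C) (adj : L ⊣ R)
    (hL : IsExact FC FD L) (hR : IsExact FD FC R)
    {A : C} {B : D} (f g : A ⟶ R.obj B)
    (h : RightHomotopic FC f g) :
    RightHomotopic FD ((adj.homEquiv A B).symm f) ((adj.homEquiv A B).symm g) := by
  obtain ⟨BB, pr₁, pr₂, hBB, PB, w, q, hw, hq, hwq₁, hwq₂,
    A', s, H, hsf, hsw, hH₁, hH₂⟩ := h
  -- Step 1: a path object for `B` in `D`.
  have htBfib : FD.Fib (FD.isTerminal.from B) := FD.all_fibrant B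
  haveI hPBpb : HasPullback (FD.isTerminal.from B) (FD.isTerminal.from B) :=
    FD.pullback_exists _ _ htBfib
  obtain ⟨Q, π₁, π₂, hQ, hδ⟩ :
      ∃ (Q : D) (π₁ π₂ : Q ⟶ B),
        IsPullback π₁ π₂ (FD.isTerminal.from B) (FD.isTerminal.from B) ∧
        ∃ δ : B ⟶ Q, δ ≫ π₁ = 𝟙 B ∧ δ ≫ π₂ = 𝟙 B := by
    refine ⟨pullback (FD.isTerminal.from B) (FD.isTerminal.from B),
      pullback.fst _ _, pullback.snd _ _, IsPullback.of_hasPullback _ _,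
      pullback.lift (𝟙 B) (𝟙 B) rfl, pullback.lift_fst _ _ _, pullback.lift_snd _ _ _⟩
  obtain ⟨δ, hδ₁, hδ₂⟩ := hδ
  have hπ₁fib : FD.Fib π₁ := FD.fib_stable π₁ π₂ _ _ hQ htBfib
  have hπ₂fib : FD.Fib π₂ := FD.fib_stable π₂ π₁ _ _ hQ.flip htBfib
  obtain ⟨P, v, p, hv, hp, hvp⟩ := FD.factor δ
  have hvp₁ : v ≫ p ≫ π₁ = 𝟙 B := by rw [← Category.assoc, hvp, hδ₁]
  have hvp₂ : v ≫ p ≫ π₂ = 𝟙 B := by rw [← Category.assoc, hvp, hδ₂]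
  -- the first endpoint evaluation `p ≫ π₁` is an acyclic fibration in `D`
  have he₁fib : FD.Fib (p ≫ π₁) := FD.fib_comp p π₁ hp hπ₁fib
  have he₁weq : FD.Weq (p ≫ π₁) :=
    FD.weq_cancel_right v (p ≫ π₁) hv (by rw [hvp₁]; exact FD.weq_id B)
  -- Step 2: `R P` is a path object for `R B` in `C`.
  have hT' : IsTerminal (R.obj FD.term) := hR.2.2.2.some
  have hRQ : IsPullback (R.map π₁) (R.map π₂)
      (R.map (FD.isTerminal.from B)) (R.map (FD.isTerminal.from B)) :=
    hR.2.2.1 π₁ π₂ _ _ hQ htBfib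
  have hRe : FC.Fib (R.map (p ≫ π₁)) ∧ FC.Weq (R.map (p ≫ π₁)) :=
    hR.2.1 (p ≫ π₁) he₁fib he₁weq
  have hRv : FC.Weq (R.map v) := by
    refine FC.weq_cancel_left (R.map v) (R.map (p ≫ π₁)) ?_ hRe.2
    rw [← R.map_comp, hvp₁, R.map_id]
    exact FC.weq_id _
  -- comparison `u : R P ⟶ BB` between the two products of `R B`
  obtain ⟨u, hu₁, hu₂⟩ :
      ∃ u : R.obj P ⟶ BB,
        u ≫ pr₁ = R.map p ≫ R.map π₁ ∧ u ≫ pr₂ = R.map p ≫ R.map π₂ :=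
    ⟨hBB.lift (R.map p ≫ R.map π₁) (R.map p ≫ R.map π₂) (FC.isTerminal.hom_ext _ _),
      hBB.lift_fst _ _ _, hBB.lift_snd _ _ _⟩
  obtain ⟨φ, hφ₁, hφ₂⟩ :
      ∃ φ : R.obj Q ⟶ BB, φ ≫ pr₁ = R.map π₁ ∧ φ ≫ pr₂ = R.map π₂ :=
    ⟨hBB.lift (R.map π₁) (R.map π₂) (FC.isTerminal.hom_ext _ _),
      hBB.lift_fst _ _ _, hBB.lift_snd _ _ _⟩
  obtain ⟨φ', hφ'₁, hφ'₂⟩ :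
      ∃ φ' : BB ⟶ R.obj Q, φ' ≫ R.map π₁ = pr₁ ∧ φ' ≫ R.map π₂ = pr₂ :=
    ⟨hRQ.lift pr₁ pr₂ (hT'.hom_ext _ _), hRQ.lift_fst _ _ _, hRQ.lift_snd _ _ _⟩
  have hφiso : IsIso φ := by
    refine ⟨φ', ?_, ?_⟩
    · exact hRQ.hom_ext (by rw [Category.assoc, hφ'₁, hφ₁, Category.id_comp])
        (by rw [Category.assoc, hφ'₂, hφ₂, Category.id_comp])
    · exact hBB.hom_ext (by rw [Category.assoc, hφ₁, hφ'₁, Category.id_comp])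
        (by rw [Category.assoc, hφ₂, hφ'₂, Category.id_comp])
  have hufib : FC.Fib u := by
    have hu_eq : u = R.map p ≫ φ := by
      refine hBB.hom_ext ?_ ?_
      · rw [hu₁, Category.assoc, hφ₁]
      · rw [hu₂, Category.assoc, hφ₂]
    rw [hu_eq]
    exact FC.fib_comp _ _ (hR.1 p hp) (FC.iso_acyclic φ hφiso).1
  -- Step 3: Brown's comparison of the two path objects `PB` and `R P` of `R B`.
  haveI hVpb : HasPullback q u := FC.pullback_exists q u hufib
  obtain ⟨V, a, b, hab, hθ⟩ :
      ∃ (V : C) (a : V ⟶ PB) (b : V ⟶ R.obj P),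
        (IsPullback a b q u) ∧ ∃ θ : R.obj B ⟶ V, θ ≫ a = w ∧ θ ≫ b = R.map v := by
    have hθcond : w ≫ q = R.map v ≫ u := by
      refine hBB.hom_ext ?_ ?_
      · simp only [Category.assoc]
        rw [hwq₁, hu₁, ← R.map_comp, ← R.map_comp, hvp₁, R.map_id]
      · simp only [Category.assoc]
        rw [hwq₂, hu₂, ← R.map_comp, ← R.map_comp, hvp₂, R.map_id]
    exact ⟨pullback q u, pullback.fst q u, pullback.snd q u,
      IsPullback.of_hasPullback q u, pullback.lift w (R.map v) hθcond,
      pullback.lift_fst _ _ _, pullback.lift_snd _ _ _⟩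
  obtain ⟨θ, hθa, hθb⟩ := hθ
  have hafib : FC.Fib a := FC.fib_stable a b q u hab hufib
  obtain ⟨W, j, t, hj, ht, hjt⟩ := FC.factor θ
  have hψfib : FC.Fib (t ≫ a) := FC.fib_comp t a ht hafib
  have hjψ : j ≫ t ≫ a = w := by rw [← Category.assoc, hjt, hθa]
  have hψweq : FC.Weq (t ≫ a) :=
    FC.weq_cancel_right j (t ≫ a) hj (by rw [hjψ]; exact hw)
  -- Step 4: pull back the acyclic fibration `t ≫ a` along the homotopy `H`.
  haveI hA2pb : HasPullback H (t ≫ a) := FC.pullback_exists H (t ≫ a) hψfib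
  obtain ⟨A₂, π, K, hA₂, hπK⟩ :
      ∃ (A₂ : C) (π : A₂ ⟶ A') (K : A₂ ⟶ W),
        IsPullback π K H (t ≫ a) ∧ π ≫ H = K ≫ (t ≫ a) :=
    ⟨pullback H (t ≫ a), pullback.fst H (t ≫ a), pullback.snd H (t ≫ a),
      IsPullback.of_hasPullback _ _, pullback.condition⟩
  have hπfib : FC.Fib π := FC.fib_stable π K H (t ≫ a) hA₂ hψfib
  have hπweq : FC.Weq π := FC.acyclic_fib_stable π K H (t ≫ a) hA₂ hψfib hψweq
  have hVcond : a ≫ q = b ≫ u := hab.w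
  have hH₂u : (K ≫ t ≫ b) ≫ u = π ≫ H ≫ q := by
    calc (K ≫ t ≫ b) ≫ u = K ≫ t ≫ (b ≫ u) := by simp only [Category.assoc]
      _ = K ≫ t ≫ (a ≫ q) := by rw [← hVcond]
      _ = (K ≫ (t ≫ a)) ≫ q := by simp only [Category.assoc]
      _ = (π ≫ H) ≫ q := by rw [← hπK]
      _ = π ≫ H ≫ q := by rw [Category.assoc]
  have hC₁ : K ≫ t ≫ b ≫ R.map (p ≫ π₁) = π ≫ s ≫ f := by
    have h' : ((K ≫ t ≫ b) ≫ u) ≫ pr₁ = (π ≫ H ≫ q) ≫ pr₁ := by rw [hH₂u]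
    rw [Category.assoc, hu₁, ← R.map_comp] at h'
    simp only [Category.assoc] at h'
    rw [hH₁] at h'
    exact h'
  have hC₂ : K ≫ t ≫ b ≫ R.map (p ≫ π₂) = π ≫ s ≫ g := by
    have h' : ((K ≫ t ≫ b) ≫ u) ≫ pr₂ = (π ≫ H ≫ q) ≫ pr₂ := by rw [hH₂u]
    rw [Category.assoc, hu₂, ← R.map_comp] at h'
    simp only [Category.assoc] at h'
    rw [hH₂] at h'
    exact h'
  -- Step 5: transpose everything along the adjunction.
  have hnat : ∀ {Z : D} (k : P ⟶ Z),
      adj.counit.app P ≫ k = L.map (R.map k) ≫ adj.counit.app Z := by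
    intro Z k
    exact (adj.counit.naturality k).symm
  have key : ∀ (k : P ⟶ B) (c : A₂ ⟶ A) (e : A ⟶ R.obj B),
      K ≫ t ≫ b ≫ R.map k = π ≫ s ≫ e → c = π ≫ s →
      (L.map (K ≫ t ≫ b) ≫ adj.counit.app P) ≫ k
        = L.map c ≫ (adj.homEquiv A B).symm e := by
    intro k c e hcomp hc
    rw [adj.homEquiv_counit, hc]
    calc (L.map (K ≫ t ≫ b) ≫ adj.counit.app P) ≫ k
        = L.map (K ≫ t ≫ b) ≫ (adj.counit.app P ≫ k) := by rw [Category.assoc]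
      _ = L.map (K ≫ t ≫ b) ≫ L.map (R.map k) ≫ adj.counit.app B := by rw [hnat k]
      _ = L.map (K ≫ t ≫ b ≫ R.map k) ≫ adj.counit.app B := by
          simp only [Functor.map_comp, Category.assoc]
      _ = L.map (π ≫ s ≫ e) ≫ adj.counit.app B := by rw [hcomp]
      _ = L.map (π ≫ s) ≫ L.map e ≫ adj.counit.app B := by
          simp only [Functor.map_comp, Category.assoc]
  refine ⟨Q, π₁, π₂, hQ, P, v, p, hv, hp, hvp₁, hvp₂,
    L.obj A₂, L.map (π ≫ s), L.map (K ≫ t ≫ b) ≫ adj.counit.app P, ?_, ?_, ?_, ?_⟩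
  · exact hL.1 (π ≫ s) (FC.fib_comp π s hπfib hsf)
  · exact (hL.2.1 (π ≫ s) (FC.fib_comp π s hπfib hsf) (FC.weq_comp π s hπweq hsw)).2
  · have := key (p ≫ π₁) (π ≫ s) f hC₁ rfl
    simpa only [Category.assoc] using this
  · have := key (p ≫ π₂) (π ≫ s) g hC₂ rfl
    simpa only [Category.assoc] using this
end

section
/- In a fibration category, any map homotopic (right-homotopic) to a weak equivalence is itself a weak equivalence. -/
open CategoryTheory CategoryTheory.Limits

universe v u

variable {C : Type u} [Category.{v} C]

/-- In a fibration category, any map right-homotopic to a weak equivalence is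
itself a weak equivalence. -/
theorem stmt10 (F : FibrationCategory C) {A B : C} (f g : A ⟶ B)
    (h : RightHomotopic F f g) (hf : F.Weq f) : F.Weq g := by
  obtain ⟨BB, pr₁, pr₂, hpb, PB, w, q, hw, hq, h1, h2, A', s, H, hsf, hsw, hH1, hH2⟩ := h
  -- q ≫ pr₁ and q ≫ pr₂ are weak equivalences by 2-out-of-3 (right cancellation)
  have hp₁ : F.Weq (q ≫ pr₁) := by
    have := F.two_of_six (𝟙 B) w (q ≫ pr₁) (by simpa using hw) (by rw [h1]; exact F.weq_id B)
    exact this.2.2.1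
  have hp₂ : F.Weq (q ≫ pr₂) := by
    have := F.two_of_six (𝟙 B) w (q ≫ pr₂) (by simpa using hw) (by rw [h2]; exact F.weq_id B)
    exact this.2.2.1
  -- H is a weak equivalence: H ≫ (q ≫ pr₁) = s ≫ f is a weq, and q ≫ pr₁ is a weq
  have hH : F.Weq H := by
    have := F.two_of_six H (q ≫ pr₁) (𝟙 B)
      (by rw [hH1]; exact F.weq_comp s f hsw hf) (by simpa using hp₁)
    exact this.1
  -- hence s ≫ g = H ≫ (q ≫ pr₂) is a weq
  have hsg : F.Weq (s ≫ g) := by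
    rw [← hH2]; exact F.weq_comp H (q ≫ pr₂) hH hp₂
  -- cancel s
  have := F.two_of_six (𝟙 A') s g (by simpa using hsw) hsg
  exact this.2.2.1
end

section
/- In a categorical model of type theory, for any dependent projection p_Δ : Γ.Δ → Γ, the pullback functor p_Δ* : C↠Γ → C↠(Γ.Δ) admits a right adjoint, given on objects by sending a dependent projection Γ.Δ.Θ → Γ.Δ to Γ.Π(Δ,Θ) → Γ, with counit constructed from the exchange map and the application map app_{Δ,Θ}, and with the universal property following from the Π-η rule. -/
open CategoryTheory CategoryTheory.Limits

universe v u

/-- The part of the structure of a categorical model of type theory needed to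
state the statement: a class of dependent projections closed under composition
and containing identities, chosen pullbacks of dependent projections along
arbitrary maps, and a `Π`-structure with application `app`, abstraction `lam`,
and the `β`- and `η`-rules. -/
structure PiModel (C : Type u) [Category.{v} C] where
  /-- dependent projections -/
  DP : MorphismProperty C
  dp_id : ∀ X : C, DP (𝟙 X)
  dp_comp : ∀ {X Y Z : C} (f : X ⟶ Y) (g : Y ⟶ Z), DP f → DP g → DP (f ≫ g)
  /-- chosen pullback `f*E` of a dependent projection `q : E ↠ Γ` along `f` -/
  pbObj : ∀ {Γ' Γ E : C}, (Γ' ⟶ Γ) → ∀ q : E ⟶ Γ, DP q → C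
  pbProj : ∀ {Γ' Γ E : C} (f : Γ' ⟶ Γ) (q : E ⟶ Γ) (hq : DP q), pbObj f q hq ⟶ Γ'
  pbMap : ∀ {Γ' Γ E : C} (f : Γ' ⟶ Γ) (q : E ⟶ Γ) (hq : DP q), pbObj f q hq ⟶ E
  pb_isPullback : ∀ {Γ' Γ E : C} (f : Γ' ⟶ Γ) (q : E ⟶ Γ) (hq : DP q),
    IsPullback (pbProj f q hq) (pbMap f q hq) f q
  pb_dp : ∀ {Γ' Γ E : C} (f : Γ' ⟶ Γ) (q : E ⟶ Γ) (hq : DP q), DP (pbProj f q hq)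
  /-- the `Π`-type `Γ.Π(Δ,Θ)` of a dependent projection `p : T ↠ E` over a
  dependent projection `q : E ↠ Γ` -/
  Pi : ∀ {Γ E T : C} (q : E ⟶ Γ) (p : T ⟶ E), DP q → DP p → C
  PiProj : ∀ {Γ E T : C} (q : E ⟶ Γ) (p : T ⟶ E) (hq : DP q) (hp : DP p),
    Pi q p hq hp ⟶ Γ
  Pi_dp : ∀ {Γ E T : C} (q : E ⟶ Γ) (p : T ⟶ E) (hq : DP q) (hp : DP p),
    DP (PiProj q p hq hp)
  /-- application: `q*(Π(Δ,Θ)) ⟶ Θ` over `E` -/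
  app : ∀ {Γ E T : C} (q : E ⟶ Γ) (p : T ⟶ E) (hq : DP q) (hp : DP p),
    pbObj q (PiProj q p hq hp) (Pi_dp q p hq hp) ⟶ T
  app_over : ∀ {Γ E T : C} (q : E ⟶ Γ) (p : T ⟶ E) (hq : DP q) (hp : DP p),
    app q p hq hp ≫ p = pbProj q (PiProj q p hq hp) (Pi_dp q p hq hp)
  /-- abstraction -/
  lam : ∀ {Γ E T U : C} (q : E ⟶ Γ) (p : T ⟶ E) (hq : DP q) (hp : DP p)
    (u : U ⟶ Γ) (hu : DP u) (h : pbObj q u hu ⟶ T),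
    h ≫ p = pbProj q u hu → (U ⟶ Pi q p hq hp)
  lam_over : ∀ {Γ E T U : C} (q : E ⟶ Γ) (p : T ⟶ E) (hq : DP q) (hp : DP p)
    (u : U ⟶ Γ) (hu : DP u) (h : pbObj q u hu ⟶ T)
    (hcomm : h ≫ p = pbProj q u hu),
    lam q p hq hp u hu h hcomm ≫ PiProj q p hq hp = u
  /-- the `β`-rule: the transpose of `lam h` is `h` -/
  beta : ∀ {Γ E T U : C} (q : E ⟶ Γ) (p : T ⟶ E) (hq : DP q) (hp : DP p)
    (u : U ⟶ Γ) (hu : DP u) (h : pbObj q u hu ⟶ T)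
    (hcomm : h ≫ p = pbProj q u hu),
    (pb_isPullback q (PiProj q p hq hp) (Pi_dp q p hq hp)).lift
        (pbProj q u hu) (pbMap q u hu ≫ lam q p hq hp u hu h hcomm)
        (by rw [Category.assoc, lam_over, (pb_isPullback q u hu).w]) ≫
      app q p hq hp = h
  /-- the `Π`-`η` rule: abstraction is unique -/
  eta : ∀ {Γ E T U : C} (q : E ⟶ Γ) (p : T ⟶ E) (hq : DP q) (hp : DP p)
    (u : U ⟶ Γ) (hu : DP u) (h : pbObj q u hu ⟶ T)
    (hcomm : h ≫ p = pbProj q u hu) (v : U ⟶ Pi q p hq hp)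
    (hv : v ≫ PiProj q p hq hp = u),
    (pb_isPullback q (PiProj q p hq hp) (Pi_dp q p hq hp)).lift
        (pbProj q u hu) (pbMap q u hu ≫ v)
        (by rw [Category.assoc, hv, (pb_isPullback q u hu).w]) ≫
      app q p hq hp = h →
    v = lam q p hq hp u hu h hcomm

variable {C : Type u} [Category.{v} C]

/-- The category of dependent projections over `Γ`. -/
abbrev FibDP (M : PiModel C) (Γ : C) : Type _ :=
  ObjectProperty.FullSubcategory (fun X : Over Γ => M.DP X.hom)

/-!
Pulling back along `q` sends a map `k : U ⟶ V` over `Γ` to the map `q*k` induced by the pullback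
square. Abstraction `lam` is a bijection `(q*U ⟶ Θ) ≃ (U ⟶ Π(q,Θ))` over the bases, with inverse
`v ↦ q*v ≫ app`: the `β`-rule and the `η`-rule say exactly that the two are mutually inverse.
Naturality in `U` follows from `η` and functoriality of `q*`, and a hom-set bijection natural in
the left variable determines the right adjoint, acting on maps by `g ↦ lam (app ≫ g)`.
-/

namespace PiModel

variable (M : PiModel C)

section PullbackHom

variable {Γ' Γ : C} (f : Γ' ⟶ Γ) {U V : C} {u : U ⟶ Γ} {w : V ⟶ Γ}

noncomputable def pbHom (hu : M.DP u) (hw : M.DP w) (k : U ⟶ V) (hk : k ≫ w = u) :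
    M.pbObj f u hu ⟶ M.pbObj f w hw :=
  (M.pb_isPullback f w hw).lift (M.pbProj f u hu) (M.pbMap f u hu ≫ k)
    (by rw [Category.assoc, hk, (M.pb_isPullback f u hu).w])

@[simp]
lemma pbHom_pbProj (hu : M.DP u) (hw : M.DP w) (k : U ⟶ V) (hk : k ≫ w = u) :
    M.pbHom f hu hw k hk ≫ M.pbProj f w hw = M.pbProj f u hu :=
  IsPullback.lift_fst _ _ _ _

@[simp]
lemma pbHom_pbMap (hu : M.DP u) (hw : M.DP w) (k : U ⟶ V) (hk : k ≫ w = u) :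
    M.pbHom f hu hw k hk ≫ M.pbMap f w hw = M.pbMap f u hu ≫ k :=
  IsPullback.lift_snd _ _ _ _

lemma pbHom_id (hu : M.DP u) : M.pbHom f hu hu (𝟙 U) (Category.id_comp u) = 𝟙 _ := by
  apply (M.pb_isPullback f u hu).hom_ext <;> simp

lemma pbHom_comp {W : C} {x : W ⟶ Γ} (hx : M.DP x) (hu : M.DP u) (hw : M.DP w)
    (k : W ⟶ U) (hk : k ≫ u = x) (l : U ⟶ V) (hl : l ≫ w = u) :
    M.pbHom f hx hw (k ≫ l) (by rw [Category.assoc, hl, hk]) =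
      M.pbHom f hx hu k hk ≫ M.pbHom f hu hw l hl := by
  apply (M.pb_isPullback f w hw).hom_ext
  · simp
  · simp only [Category.assoc, pbHom_pbMap]
    rw [← Category.assoc (M.pbHom f hx hu k hk), pbHom_pbMap, Category.assoc]

end PullbackHom

section Uncurry

variable {Γ E T U : C} (q : E ⟶ Γ) (p : T ⟶ E) (hq : M.DP q) (hp : M.DP p) {u : U ⟶ Γ}
  (hu : M.DP u)

noncomputable def uncurry (v : U ⟶ M.Pi q p hq hp) (hv : v ≫ M.PiProj q p hq hp = u) :
    M.pbObj q u hu ⟶ T :=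
  M.pbHom q hu (M.Pi_dp q p hq hp) v hv ≫ M.app q p hq hp

lemma uncurry_comp_proj (v : U ⟶ M.Pi q p hq hp) (hv : v ≫ M.PiProj q p hq hp = u) :
    M.uncurry q p hq hp hu v hv ≫ p = M.pbProj q u hu := by
  rw [uncurry, Category.assoc, M.app_over, pbHom_pbProj]

lemma uncurry_lam (h : M.pbObj q u hu ⟶ T) (hh : h ≫ p = M.pbProj q u hu) :
    M.uncurry q p hq hp hu (M.lam q p hq hp u hu h hh) (M.lam_over q p hq hp u hu h hh) = h :=
  M.beta q p hq hp u hu h hh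

lemma eq_lam_of_uncurry_eq (h : M.pbObj q u hu ⟶ T) (hh : h ≫ p = M.pbProj q u hu)
    (v : U ⟶ M.Pi q p hq hp) (hv : v ≫ M.PiProj q p hq hp = u)
    (hvh : M.uncurry q p hq hp hu v hv = h) : v = M.lam q p hq hp u hu h hh :=
  M.eta q p hq hp u hu h hh v hv hvh

lemma uncurry_comp_left {U' : C} {u' : U' ⟶ Γ} (hu' : M.DP u') (k : U' ⟶ U) (hk : k ≫ u = u')
    (v : U ⟶ M.Pi q p hq hp) (hv : v ≫ M.PiProj q p hq hp = u) :
    M.uncurry q p hq hp hu' (k ≫ v) (by rw [Category.assoc, hv, hk]) =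
      M.pbHom q hu' hu k hk ≫ M.uncurry q p hq hp hu v hv := by
  rw [uncurry, uncurry, pbHom_comp, Category.assoc]

lemma comp_lam {U' : C} {u' : U' ⟶ Γ} (hu' : M.DP u') (k : U' ⟶ U) (hk : k ≫ u = u')
    (h : M.pbObj q u hu ⟶ T) (hh : h ≫ p = M.pbProj q u hu) :
    k ≫ M.lam q p hq hp u hu h hh =
      M.lam q p hq hp u' hu' (M.pbHom q hu' hu k hk ≫ h) (by simp [hh]) := by
  refine M.eq_lam_of_uncurry_eq q p hq hp hu' _ _ _ (by rw [Category.assoc, M.lam_over, hk]) ?_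
  rw [uncurry_comp_left _ _ _ _ _ hu _ _ hk _ (M.lam_over ..), uncurry_lam]

end Uncurry

lemma FibDP.hom_ext {Γ : C} {U V : FibDP M Γ} {f g : U ⟶ V} (h : f.hom.left = g.hom.left) :
    f = g :=
  ObjectProperty.hom_ext _ (Over.OverMorphism.ext h)

variable {Γ E : C} (q : E ⟶ Γ) (hq : M.DP q)

noncomputable def pullbackFunctor : FibDP M Γ ⥤ FibDP M E where
  obj U := ⟨Over.mk (M.pbProj q U.obj.hom U.property), M.pb_dp q U.obj.hom U.property⟩
  map f := ObjectProperty.homMk <| Over.homMk (M.pbHom q _ _ f.hom.left (Over.w f.hom))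
  map_id U := FibDP.hom_ext M <| M.pbHom_id q U.property
  map_comp f g := FibDP.hom_ext M <|
    M.pbHom_comp q _ _ _ f.hom.left (Over.w f.hom) g.hom.left (Over.w g.hom)

def piObj (Θ : FibDP M E) : FibDP M Γ :=
  ⟨Over.mk (M.PiProj q Θ.obj.hom hq Θ.property), M.Pi_dp q Θ.obj.hom hq Θ.property⟩

noncomputable def pullbackPiHomEquiv (U : FibDP M Γ) (Θ : FibDP M E) :
    ((M.pullbackFunctor q).obj U ⟶ Θ) ≃ (U ⟶ M.piObj q hq Θ) where
  toFun k := ObjectProperty.homMk <| Over.homMk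
    (M.lam q Θ.obj.hom hq Θ.property U.obj.hom U.property k.hom.left (Over.w k.hom))
    (M.lam_over _ _ _ _ _ _ _ _)
  invFun v := ObjectProperty.homMk <| Over.homMk
    (M.uncurry q Θ.obj.hom hq Θ.property U.property v.hom.left (Over.w v.hom))
    (M.uncurry_comp_proj _ _ _ _ _ _ _)
  left_inv _ := FibDP.hom_ext M <| M.uncurry_lam _ _ _ _ _ _ _
  right_inv _ := FibDP.hom_ext M <|
    (M.eq_lam_of_uncurry_eq _ _ _ _ _ _ _ _ _ rfl).symm

lemma pullbackPiHomEquiv_naturality_left {U' U : FibDP M Γ} {Θ : FibDP M E} (f : U' ⟶ U)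
    (k : (M.pullbackFunctor q).obj U ⟶ Θ) :
    M.pullbackPiHomEquiv q hq U' Θ ((M.pullbackFunctor q).map f ≫ k) =
      f ≫ M.pullbackPiHomEquiv q hq U Θ k :=
  FibDP.hom_ext M <|
    (M.comp_lam _ _ _ _ _ _ _ (Over.w f.hom) _ _).symm

noncomputable def piFunctor : FibDP M E ⥤ FibDP M Γ :=
  Adjunction.rightAdjointOfEquiv (M.pullbackPiHomEquiv q hq)
    fun _ _ _ => M.pullbackPiHomEquiv_naturality_left q hq

noncomputable def pullbackPiAdjunction : M.pullbackFunctor q ⊣ M.piFunctor q hq :=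
  Adjunction.adjunctionOfEquivRight _ _

end PiModel

/-- In a categorical model of type theory, for any dependent projection
`q : Γ.Δ ↠ Γ`, the pullback functor `q* : C↠Γ ⥤ C↠(Γ.Δ)` admits a right
adjoint, given on objects by sending a dependent projection `Γ.Δ.Θ ↠ Γ.Δ` to
`Γ.Π(Δ,Θ) ↠ Γ` (the universal property following from the `Π`-`η` rule). -/
theorem stmt18 (M : PiModel C) {Γ E : C} (q : E ⟶ Γ) (hq : M.DP q) :
    ∃ qstar : FibDP M Γ ⥤ FibDP M E,
      -- `qstar` is given on objects by pullback along `q`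
      (∀ U : FibDP M Γ, ∃ m : (qstar.obj U).obj.left ⟶ U.obj.left,
        IsPullback (qstar.obj U).obj.hom m q U.obj.hom) ∧
      ∃ R : FibDP M E ⥤ FibDP M Γ,
        -- `R` is given on objects by the `Π`-construction
        (∀ Θ : FibDP M E,
          ∃ h : (R.obj Θ).obj.left = M.Pi q Θ.obj.hom hq Θ.property,
            (R.obj Θ).obj.hom = eqToHom h ≫ M.PiProj q Θ.obj.hom hq Θ.property) ∧
        -- and `R` is right adjoint to `qstar`
        Nonempty (qstar ⊣ R) :=
  ⟨M.pullbackFunctor q, fun U => ⟨_, M.pb_isPullback q U.obj.hom U.property⟩,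
    M.piFunctor q hq, fun _ => ⟨rfl, (Category.id_comp _).symm⟩, ⟨M.pullbackPiAdjunction q hq⟩⟩
end
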